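/- arXiv:2511.08307 — 2 statements merged into one kernel-verified Lean document; each statement's English description precedes it below -/
import Mathlib

section
/- Let U, Û ∈ ℝ^{n×d} have orthonormal columns, and let W be the orthogonal factor in the polar decomposition of UᵀÛ (i.e., W = W₁W₂ᵀ where UᵀÛ = W₁ΣW₂ᵀ is the SVD). Then ‖UᵀÛ − W‖_F ≤ ‖sin Θ(U, Û)‖_F², where sin Θ(U,Û) denotes the diagonal matrix of sines of principal angles between the column spaces of U and Û. -/
open Matrix Finset

noncomputable def frobNorm {m n : Type*} [Fintype m] [Fintype n]
    (A : Matrix m n ℝ) : ℝ :=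
  Real.sqrt (∑ i, ∑ j, (A i j) ^ 2)

lemma sumsq_eq_trace {m n : Type*} [Fintype m] [Fintype n] (A : Matrix m n ℝ) :
    ∑ i, ∑ j, (A i j) ^ 2 = Matrix.trace (Aᵀ * A) := by
  simp only [Matrix.trace, Matrix.diag, Matrix.mul_apply, Matrix.transpose_apply, sq]
  exact Finset.sum_comm

lemma sum_sq_le_sq_sum {d : ℕ} (a : Fin d → ℝ) (ha : ∀ i, 0 ≤ a i) :
    ∑ i, (a i) ^ 2 ≤ (∑ i, a i) ^ 2 := by
  rw [sq (∑ i, a i), Finset.sum_mul]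
  apply Finset.sum_le_sum
  intro i _
  rw [sq]
  exact mul_le_mul_of_nonneg_left (Finset.single_le_sum (fun j _ => ha j) (Finset.mem_univ i)) (ha i)

/-- for U, Û with orthonormal columns, with UᵀÛ = W₁ (cos Θ) W₂ᵀ its SVD
(cosines of principal angles as singular values) and W = W₁W₂ᵀ the orthogonal polar
factor, we have ‖UᵀÛ − W‖_F ≤ ‖sin Θ‖_F². -/
theorem stmt9 {n d : ℕ} (U Uhat : Matrix (Fin n) (Fin d) ℝ)
    (hU : Uᵀ * U = 1) (hUhat : Uhatᵀ * Uhat = 1)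
    (W₁ W₂ : Matrix (Fin d) (Fin d) ℝ)
    (hW₁ : W₁ᵀ * W₁ = 1) (hW₂ : W₂ᵀ * W₂ = 1)
    (θ : Fin d → ℝ) (hθ : ∀ i, θ i ∈ Set.Icc 0 (Real.pi / 2))
    (hSVD : Uᵀ * Uhat = W₁ * Matrix.diagonal (fun i => Real.cos (θ i)) * W₂ᵀ) :
    frobNorm (Uᵀ * Uhat - W₁ * W₂ᵀ)
      ≤ (frobNorm (Matrix.diagonal fun i => Real.sin (θ i))) ^ 2 := by
  set a : Fin d → ℝ := fun i => Real.cos (θ i) - 1 with ha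
  have hdiff : Uᵀ * Uhat - W₁ * W₂ᵀ = W₁ * Matrix.diagonal a * W₂ᵀ := by
    rw [hSVD]
    have : Matrix.diagonal a = Matrix.diagonal (fun i => Real.cos (θ i)) - 1 := by
      rw [← Matrix.diagonal_one, ← Matrix.diagonal_sub]
    rw [this, Matrix.mul_sub, Matrix.mul_one, Matrix.sub_mul]
  -- compute the sum of squares of the difference
  have key : ∑ i, ∑ j, ((Uᵀ * Uhat - W₁ * W₂ᵀ) i j) ^ 2 = ∑ i, (a i) ^ 2 := by
    rw [hdiff, sumsq_eq_trace]
    have h1 : (W₁ * Matrix.diagonal a * W₂ᵀ)ᵀ * (W₁ * Matrix.diagonal a * W₂ᵀ)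
        = W₂ * ((Matrix.diagonal a)ᵀ * (Matrix.diagonal a * W₂ᵀ)) := by
      simp only [Matrix.transpose_mul, Matrix.transpose_transpose, Matrix.mul_assoc]
      rw [← Matrix.mul_assoc W₁ᵀ W₁, hW₁, Matrix.one_mul]
    rw [h1, Matrix.trace_mul_comm, Matrix.mul_assoc, Matrix.mul_assoc, hW₂, Matrix.mul_one,
      Matrix.diagonal_transpose, Matrix.diagonal_mul_diagonal, Matrix.trace_diagonal]
    simp [sq]
  have hsin : ∑ i, ∑ j, ((Matrix.diagonal fun i => Real.sin (θ i)) i j) ^ 2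
      = ∑ i, Real.sin (θ i) ^ 2 := by
    rw [sumsq_eq_trace, Matrix.diagonal_transpose, Matrix.diagonal_mul_diagonal,
      Matrix.trace_diagonal]
    simp [sq]
  have hanon : ∀ i, 0 ≤ -(a i) := by
    intro i
    have := Real.cos_le_one (θ i)
    simp [ha]; linarith
  have hsq : ∀ i, (a i)^2 = (-(a i))^2 := by intro i; ring
  unfold frobNorm
  rw [key, hsin]
  have hsin_nonneg : 0 ≤ ∑ i, Real.sin (θ i) ^ 2 :=
    Finset.sum_nonneg fun i _ => sq_nonneg _
  rw [Real.sq_sqrt hsin_nonneg]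
  have step1 : ∑ i, (a i) ^ 2 ≤ (∑ i, -(a i)) ^ 2 := by
    simp_rw [hsq]
    exact sum_sq_le_sq_sum _ hanon
  have step2 : ∑ i, -(a i) ≤ ∑ i, Real.sin (θ i) ^ 2 := by
    apply Finset.sum_le_sum
    intro i _
    obtain ⟨h0, h1⟩ := hθ i
    have hc : 0 ≤ Real.cos (θ i) := Real.cos_nonneg_of_mem_Icc ⟨by linarith [Real.pi_pos], h1⟩
    have hs : Real.sin (θ i) ^ 2 = 1 - Real.cos (θ i) ^ 2 := by
      have := Real.sin_sq_add_cos_sq (θ i); linarith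
    have hcl := Real.cos_le_one (θ i)
    simp only [ha]
    nlinarith
  calc Real.sqrt (∑ i, (a i) ^ 2) ≤ Real.sqrt ((∑ i, -(a i)) ^ 2) := Real.sqrt_le_sqrt step1
    _ = ∑ i, -(a i) := Real.sqrt_sq (Finset.sum_nonneg fun i _ => hanon i)
    _ ≤ _ := step2
end

section
/- Let B and B̂ be symmetric n×n matrices, B of rank d with smallest nonzero eigenvalue (in magnitude) at least λ > 0, and let U, Û ∈ ℝ^{n×d} contain orthonormal eigenvectors corresponding to the top-d eigenvalues (by magnitude) of B and B̂ respectively. If ‖B̂ − B‖ ≤ λ/4, then ‖sin Θ(U, Û)‖ ≤ 2‖B̂ − B‖/λ. -/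
open Matrix

noncomputable def specNorm {m n : Type*} [Fintype m] [Fintype n] [DecidableEq n]
    (A : Matrix m n ℝ) : ℝ :=
  ‖LinearMap.toContinuousLinearMap (Matrix.toEuclideanLin A)‖

/-- The spectral norm characterization ‖sin Θ(U, Û)‖ = ‖(I − ÛÛᵀ)U‖ of the matrix of
principal angles between the column spaces of two matrices with orthonormal columns. -/
noncomputable def sinThetaNorm {n d : ℕ} (U Uhat : Matrix (Fin n) (Fin d) ℝ) : ℝ :=
  specNorm ((1 - Uhat * Uhatᵀ) * U)

/-!
Complete Û by the remaining orthonormal eigenvectors V of B̂, with eigenvalues ν. Then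
I − ÛÛᵀ = VVᵀ, so ‖sin Θ‖ = ‖VᵀU‖.

Each |ν_j| is at most ‖B̂ − B‖: the span of the columns of Û and the j-th column of V has
dimension d + 1 > rank B, so it contains a vector x ≠ 0 with Bx = 0, and on that span
‖B̂x‖ ≥ |ν_j| ‖x‖ because ν_j is the smallest of the corresponding eigenvalues in magnitude.

Finally S = VᵀU solves the Sylvester equation S Λ = diag(ν) S + Vᵀ(B − B̂)U. As |Λ| ≥ λ,
this gives (λ − ‖B̂ − B‖) ‖S‖ ≤ ‖B̂ − B‖, and ‖B̂ − B‖ ≤ λ/4 yields ‖S‖ ≤ 2‖B̂ − B‖/λ.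
-/

open scoped Matrix.Norms.L2Operator

lemma specNorm_eq_l2_opNorm {m n : Type*} [Fintype m] [Fintype n] [DecidableEq n]
    (A : Matrix m n ℝ) : specNorm A = ‖A‖ :=
  rfl

namespace Matrix

variable {m ι κ : Type*}

lemma l2_opNorm_one_le [Fintype ι] [DecidableEq ι] : ‖(1 : Matrix ι ι ℝ)‖ ≤ 1 := by
  rw [← diagonal_one, l2_opNorm_diagonal]
  exact (pi_norm_le_iff_of_nonneg zero_le_one).2 fun _ => norm_one.le

lemma l2_opNorm_mul_of_transpose_mul_self_eq_one [Fintype m] [Fintype ι] [DecidableEq ι]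
    [Fintype κ] [DecidableEq κ] {V : Matrix m ι ℝ} (hV : Vᵀ * V = 1) (X : Matrix ι κ ℝ) :
    ‖V * X‖ = ‖X‖ := by
  have h := l2_opNorm_conjTranspose_mul_self (V * X)
  rw [conjTranspose_mul, Matrix.mul_assoc, ← Matrix.mul_assoc Vᴴ,
    conjTranspose_eq_transpose_of_trivial V, hV, Matrix.one_mul,
    l2_opNorm_conjTranspose_mul_self] at h
  exact (mul_self_inj (norm_nonneg _) (norm_nonneg _)).1 h.symm

lemma l2_opNorm_le_one_of_transpose_mul_self_eq_one [Fintype m] [Fintype ι] [DecidableEq ι]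
    {V : Matrix m ι ℝ} (hV : Vᵀ * V = 1) : ‖V‖ ≤ 1 :=
  calc ‖V‖ = ‖V * (1 : Matrix ι ι ℝ)‖ := by rw [Matrix.mul_one]
    _ = ‖(1 : Matrix ι ι ℝ)‖ := l2_opNorm_mul_of_transpose_mul_self_eq_one hV 1
    _ ≤ 1 := l2_opNorm_one_le

lemma l2_opNorm_transpose_mul_mul_le [Fintype m] [DecidableEq m] [Fintype ι] [DecidableEq ι]
    [Fintype κ] [DecidableEq κ] {U : Matrix m ι ℝ} {V : Matrix m κ ℝ} (hU : Uᵀ * U = 1)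
    (hV : Vᵀ * V = 1) (A : Matrix m m ℝ) : ‖Vᵀ * A * U‖ ≤ ‖A‖ := by
  have hVt : ‖Vᵀ‖ ≤ 1 := by
    rw [← conjTranspose_eq_transpose_of_trivial, l2_opNorm_conjTranspose]
    exact l2_opNorm_le_one_of_transpose_mul_self_eq_one hV
  calc ‖Vᵀ * A * U‖ ≤ ‖Vᵀ‖ * ‖A‖ * ‖U‖ := by grw [l2_opNorm_mul, l2_opNorm_mul]
    _ ≤ ‖A‖ := by
        grw [hVt, l2_opNorm_le_one_of_transpose_mul_self_eq_one hU]
        rw [one_mul, mul_one]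

lemma l2_opNorm_diagonal_le [Fintype ι] [DecidableEq ι] {w : ι → ℝ} {c : ℝ} (hc : 0 ≤ c)
    (hw : ∀ i, |w i| ≤ c) : ‖(diagonal w : Matrix ι ι ℝ)‖ ≤ c := by
  rw [l2_opNorm_diagonal]
  exact (pi_norm_le_iff_of_nonneg hc).2 hw

lemma l2_opNorm_diagonal_inv_le [Fintype ι] [DecidableEq ι] {w : ι → ℝ} {μ : ℝ} (hμ : 0 < μ)
    (hw : ∀ i, μ ≤ |w i|) : ‖(diagonal w⁻¹ : Matrix ι ι ℝ)‖ ≤ μ⁻¹ :=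
  l2_opNorm_diagonal_le (inv_nonneg.2 hμ.le) fun i => by
    rw [Pi.inv_apply, abs_inv]
    exact inv_anti₀ hμ (hw i)

lemma diagonal_inv_mul_diagonal [Fintype ι] [DecidableEq ι] {w : ι → ℝ} (hw : ∀ i, w i ≠ 0) :
    (diagonal w⁻¹ : Matrix ι ι ℝ) * diagonal w = 1 := by
  rw [diagonal_mul_diagonal, ← diagonal_one]
  exact congrArg diagonal (funext fun i => inv_mul_cancel₀ (hw i))

lemma diagonal_mul_diagonal_inv [Fintype ι] [DecidableEq ι] {w : ι → ℝ} (hw : ∀ i, w i ≠ 0) :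
    (diagonal w : Matrix ι ι ℝ) * diagonal w⁻¹ = 1 := by
  rw [diagonal_mul_diagonal, ← diagonal_one]
  exact congrArg diagonal (funext fun i => mul_inv_cancel₀ (hw i))

lemma mul_l2_opNorm_le_l2_opNorm_diagonal_mul [Fintype ι] [DecidableEq ι] [Fintype κ]
    [DecidableEq κ] {w : ι → ℝ} {μ : ℝ} (hw : ∀ i, μ ≤ |w i|) (X : Matrix ι κ ℝ) :
    μ * ‖X‖ ≤ ‖diagonal w * X‖ := by
  rcases le_or_gt μ 0 with hμ | hμ
  · exact (mul_nonpos_of_nonpos_of_nonneg hμ (norm_nonneg _)).trans (norm_nonneg _)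
  have hw0 : ∀ i, w i ≠ 0 := fun i => abs_pos.1 (hμ.trans_le (hw i))
  refine (le_inv_mul_iff₀ hμ).1 ?_
  calc ‖X‖ = ‖diagonal w⁻¹ * (diagonal w * X)‖ := by
        rw [← Matrix.mul_assoc, diagonal_inv_mul_diagonal hw0, Matrix.one_mul]
    _ ≤ ‖(diagonal w⁻¹ : Matrix ι ι ℝ)‖ * ‖diagonal w * X‖ := l2_opNorm_mul _ _
    _ ≤ μ⁻¹ * ‖diagonal w * X‖ := by grw [l2_opNorm_diagonal_inv_le hμ hw]

lemma mul_l2_opNorm_le_l2_opNorm_mul_diagonal [Fintype ι] [Fintype κ] [DecidableEq κ]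
    {w : κ → ℝ} {μ : ℝ} (hw : ∀ i, μ ≤ |w i|) (X : Matrix ι κ ℝ) :
    μ * ‖X‖ ≤ ‖X * diagonal w‖ := by
  rcases le_or_gt μ 0 with hμ | hμ
  · exact (mul_nonpos_of_nonpos_of_nonneg hμ (norm_nonneg _)).trans (norm_nonneg _)
  have hw0 : ∀ i, w i ≠ 0 := fun i => abs_pos.1 (hμ.trans_le (hw i))
  refine (le_inv_mul_iff₀ hμ).1 ?_
  calc ‖X‖ = ‖X * diagonal w * diagonal w⁻¹‖ := by
        rw [Matrix.mul_assoc, diagonal_mul_diagonal_inv hw0, Matrix.mul_one]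
    _ ≤ ‖X * diagonal w‖ * ‖(diagonal w⁻¹ : Matrix κ κ ℝ)‖ := l2_opNorm_mul _ _
    _ ≤ μ⁻¹ * ‖X * diagonal w‖ := by
        grw [l2_opNorm_diagonal_inv_le hμ hw]
        rw [mul_comm]

lemma fromCols_transpose_mul_self_eq_one [Fintype m] [DecidableEq ι] [DecidableEq κ]
    {W₁ : Matrix m ι ℝ} {W₂ : Matrix m κ ℝ} (h₁ : W₁ᵀ * W₁ = 1) (h₂ : W₂ᵀ * W₂ = 1)
    (h : W₁ᵀ * W₂ = 0) : (fromCols W₁ W₂)ᵀ * fromCols W₁ W₂ = 1 := by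
  have h' : W₂ᵀ * W₁ = 0 := by rw [← transpose_transpose W₁, ← transpose_mul, h, transpose_zero]
  rw [transpose_fromCols, fromRows_mul_fromCols, h₁, h₂, h, h', fromBlocks_one]

lemma mul_transpose_add_mul_transpose_eq_one [Fintype m] [DecidableEq m] [Fintype ι]
    [DecidableEq ι] [Fintype κ] [DecidableEq κ] (e : m ≃ ι ⊕ κ) {W₁ : Matrix m ι ℝ}
    {W₂ : Matrix m κ ℝ} (hW : (fromCols W₁ W₂)ᵀ * fromCols W₁ W₂ = 1) :
    W₁ * W₁ᵀ + W₂ * W₂ᵀ = 1 := by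
  rw [transpose_fromCols] at hW
  rw [← fromCols_mul_fromRows, (fromCols_mul_fromRows_eq_one_comm e _ _ _ _).2 hW]

lemma mul_fromCols_eq_fromCols_mul_diagonal [Fintype m] [Fintype ι] [DecidableEq ι]
    [Fintype κ] [DecidableEq κ] {A : Matrix m m ℝ} {W₁ : Matrix m ι ℝ} {W₂ : Matrix m κ ℝ}
    {w₁ : ι → ℝ} {w₂ : κ → ℝ} (h₁ : A * W₁ = W₁ * diagonal w₁)
    (h₂ : A * W₂ = W₂ * diagonal w₂) :
    A * fromCols W₁ W₂ = fromCols W₁ W₂ * diagonal (Sum.elim w₁ w₂) := by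
  rw [mul_fromCols, h₁, h₂, ← fromBlocks_diagonal, fromCols_mul_fromBlocks]
  simp

lemma transpose_submatrix_mul_submatrix_eq_one [Fintype m] [DecidableEq ι] {ι' : Type*}
    [DecidableEq ι'] {W : Matrix m ι ℝ} (hW : Wᵀ * W = 1) {f : ι' → ι}
    (hf : Function.Injective f) : (W.submatrix id f)ᵀ * W.submatrix id f = 1 := by
  rw [transpose_submatrix, ← submatrix_mul _ _ f id f Function.bijective_id, hW,
    submatrix_one f hf]

lemma mul_submatrix_eq_submatrix_mul_diagonal [Fintype m] [Fintype ι] [DecidableEq ι]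
    {ι' : Type*} [Fintype ι'] [DecidableEq ι'] {A : Matrix m m ℝ} {W : Matrix m ι ℝ}
    {w : ι → ℝ} (h : A * W = W * diagonal w) (f : ι' → ι) :
    A * W.submatrix id f = W.submatrix id f * diagonal (w ∘ f) := by
  ext i k
  have hik := congr_fun₂ h i (f k)
  rw [mul_diagonal] at hik ⊢
  simpa [mul_apply] using hik

lemma exists_ne_zero_mulVec_eq_zero_of_rank_lt [Fintype ι] {A : Matrix m ι ℝ}
    (h : A.rank < Fintype.card ι) : ∃ a ≠ 0, A *ᵥ a = 0 := by
  by_contra! hA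
  have hinj : Function.Injective A.mulVecLin :=
    (injective_iff_map_eq_zero _).2 fun a ha => by_contra fun h0 => hA a h0 ha
  have := LinearMap.finrank_range_of_inj hinj
  rw [Module.finrank_fintype_fun_eq_card] at this
  exact h.ne this

lemma le_l2_opNorm_sub_of_rank_lt [Fintype m] [DecidableEq m] [Fintype ι] [DecidableEq ι]
    {B Bhat : Matrix m m ℝ} {W : Matrix m ι ℝ} {w : ι → ℝ} {μ : ℝ} (hW : Wᵀ * W = 1)
    (hBW : Bhat * W = W * diagonal w) (hw : ∀ i, μ ≤ |w i|) (hrank : B.rank < Fintype.card ι) :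
    μ ≤ ‖Bhat - B‖ := by
  obtain ⟨a, ha0, ha⟩ :=
    exists_ne_zero_mulVec_eq_zero_of_rank_lt ((rank_mul_le_left B W).trans_lt hrank)
  set X := replicateCol (Fin 1) a
  have hX : 0 < ‖X‖ := norm_pos_iff.2 (by simpa [X] using ha0)
  have hBX : B * (W * X) = 0 := by
    rw [← Matrix.mul_assoc, ← replicateCol_mulVec, ha, replicateCol_zero]
  refine le_of_mul_le_mul_right ?_ hX
  calc μ * ‖X‖ ≤ ‖diagonal w * X‖ := mul_l2_opNorm_le_l2_opNorm_diagonal_mul hw X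
    _ = ‖(Bhat - B) * (W * X)‖ := by
        rw [Matrix.sub_mul, hBX, sub_zero, ← Matrix.mul_assoc, hBW, Matrix.mul_assoc,
          l2_opNorm_mul_of_transpose_mul_self_eq_one hW]
    _ ≤ ‖Bhat - B‖ * ‖W * X‖ := l2_opNorm_mul _ _
    _ = ‖Bhat - B‖ * ‖X‖ := by rw [l2_opNorm_mul_of_transpose_mul_self_eq_one hW]

lemma abs_le_l2_opNorm_sub_of_rank_le [Fintype m] [DecidableEq m] [Fintype ι] [DecidableEq ι]
    [Fintype κ] [DecidableEq κ] {B Bhat : Matrix m m ℝ} {W : Matrix m (ι ⊕ κ) ℝ}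
    {w : ι ⊕ κ → ℝ} (hW : Wᵀ * W = 1) (hBW : Bhat * W = W * diagonal w)
    (hrank : B.rank ≤ Fintype.card ι) (htop : ∀ j k, |w (.inr j)| ≤ |w (.inl k)|) (j : κ) :
    |w (.inr j)| ≤ ‖Bhat - B‖ := by
  let f : ι ⊕ Unit → ι ⊕ κ := Sum.map id fun _ => j
  have hf : Function.Injective f :=
    Function.injective_id.sumMap fun _ _ _ => Subsingleton.elim _ _
  refine le_l2_opNorm_sub_of_rank_lt (transpose_submatrix_mul_submatrix_eq_one hW hf)
    (mul_submatrix_eq_submatrix_mul_diagonal hBW f) ?_ ?_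
  · rintro (k | _)
    · exact htop j k
    · rfl
  · simpa using Nat.lt_succ_of_le hrank

lemma transpose_mul_mul_diagonal_eq_diagonal_mul_add [Fintype m] [Fintype ι] [DecidableEq ι]
    [Fintype κ] [DecidableEq κ] {B Bhat : Matrix m m ℝ} (hBhat : Bhat.IsSymm)
    {U : Matrix m ι ℝ} {V : Matrix m κ ℝ} {lam : ι → ℝ} {ν : κ → ℝ}
    (hU : B * U = U * diagonal lam) (hV : Bhat * V = V * diagonal ν) :
    Vᵀ * U * diagonal lam = diagonal ν * (Vᵀ * U) + Vᵀ * (B - Bhat) * U := by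
  have hVt : Vᵀ * Bhat = diagonal ν * Vᵀ := by
    rw [← hBhat.eq, ← transpose_mul, hV, transpose_mul, diagonal_transpose]
  rw [Matrix.mul_assoc, ← hU, Matrix.mul_sub, Matrix.sub_mul, hVt, Matrix.mul_assoc,
    Matrix.mul_assoc]
  abel

lemma sub_mul_l2_opNorm_le_of_mul_diagonal_eq [Fintype ι] [DecidableEq ι] [Fintype κ]
    [DecidableEq κ] {S : Matrix ι κ ℝ} {N : Matrix ι ι ℝ} {E : Matrix ι κ ℝ} {lam : κ → ℝ}
    {μ : ℝ} (hlam : ∀ k, μ ≤ |lam k|) (h : S * diagonal lam = N * S + E) :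
    (μ - ‖N‖) * ‖S‖ ≤ ‖E‖ := by
  have hlow := mul_l2_opNorm_le_l2_opNorm_mul_diagonal hlam S
  rw [h] at hlow
  have hup := (norm_add_le (N * S) E).trans (add_le_add_left (l2_opNorm_mul N S) _)
  linarith

end Matrix

theorem stmt11_general {n d : ℕ} (B Bhat : Matrix (Fin n) (Fin n) ℝ)
    (hBhat : Bhat.IsSymm) (hrank : B.rank = d)
    (lam0 : ℝ) (hlam0 : 0 < lam0)
    (U Uhat : Matrix (Fin n) (Fin d) ℝ)
    (lam lamhat : Fin d → ℝ)
    (hUorth : Uᵀ * U = 1) (hUhatorth : Uhatᵀ * Uhat = 1)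
    (hUeig : B * U = U * Matrix.diagonal lam)
    (hUhateig : Bhat * Uhat = Uhat * Matrix.diagonal lamhat)
    (hlam : ∀ k, lam0 ≤ |lam k|)
    (V : Matrix (Fin n) (Fin (n - d)) ℝ) (ν : Fin (n - d) → ℝ)
    (hVorth : Vᵀ * V = 1) (hVperp : Uhatᵀ * V = 0)
    (hVeig : Bhat * V = V * Matrix.diagonal ν)
    (htop : ∀ j k, |ν j| ≤ |lamhat k|)
    (hpert : specNorm (Bhat - B) ≤ lam0 / 4) :
    sinThetaNorm U Uhat ≤ 2 * specNorm (Bhat - B) / lam0 := by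
  simp only [sinThetaNorm, specNorm_eq_l2_opNorm] at hpert ⊢
  have hd : d ≤ n := hrank ▸ B.rank_le_height
  have hW := fromCols_transpose_mul_self_eq_one hUhatorth hVorth hVperp
  have hBW := mul_fromCols_eq_fromCols_mul_diagonal hUhateig hVeig
  have hN : ‖(diagonal ν : Matrix _ _ ℝ)‖ ≤ ‖Bhat - B‖ :=
    l2_opNorm_diagonal_le (norm_nonneg _)
      (abs_le_l2_opNorm_sub_of_rank_le hW hBW (by simp [hrank]) htop)
  have hcompl : 1 - Uhat * Uhatᵀ = V * Vᵀ :=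
    sub_eq_of_eq_add' (mul_transpose_add_mul_transpose_eq_one
      ((finCongr (by omega)).trans finSumFinEquiv.symm) hW).symm
  have hE := l2_opNorm_transpose_mul_mul_le hUorth hVorth (B - Bhat)
  rw [norm_sub_rev] at hE
  have hS := sub_mul_l2_opNorm_le_of_mul_diagonal_eq hlam
    (transpose_mul_mul_diagonal_eq_diagonal_mul_add hBhat hUeig hVeig)
  rw [hcompl, Matrix.mul_assoc, l2_opNorm_mul_of_transpose_mul_self_eq_one hVorth,
    le_div_iff₀ hlam0]
  nlinarith [mul_le_mul_of_nonneg_right hN (norm_nonneg (Vᵀ * U)), norm_nonneg (Vᵀ * U)]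

/-- Davis–Kahan.  B is symmetric of rank d with nonzero eigenvalues of
magnitude at least λ₀; U holds orthonormal eigenvectors of those eigenvalues; Û holds
orthonormal eigenvectors of the top-d (by magnitude) eigenvalues of the symmetric B̂
(the remaining eigenvalues, listed through an orthonormal complement V, are no larger
in magnitude).  If ‖B̂ − B‖ ≤ λ₀/4 then ‖sin Θ(U, Û)‖ ≤ 2‖B̂ − B‖/λ₀. -/
theorem stmt11 {n d : ℕ} (B Bhat : Matrix (Fin n) (Fin n) ℝ)
    (hB : B.IsSymm) (hBhat : Bhat.IsSymm) (hrank : B.rank = d)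
    (lam0 : ℝ) (hlam0 : 0 < lam0)
    (U Uhat : Matrix (Fin n) (Fin d) ℝ)
    (lam lamhat : Fin d → ℝ)
    (hUorth : Uᵀ * U = 1) (hUhatorth : Uhatᵀ * Uhat = 1)
    (hUeig : B * U = U * Matrix.diagonal lam)
    (hUhateig : Bhat * Uhat = Uhat * Matrix.diagonal lamhat)
    (hlam : ∀ k, lam0 ≤ |lam k|)
    (V : Matrix (Fin n) (Fin (n - d)) ℝ) (ν : Fin (n - d) → ℝ)
    (hVorth : Vᵀ * V = 1) (hVperp : Uhatᵀ * V = 0)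
    (hVeig : Bhat * V = V * Matrix.diagonal ν)
    (htop : ∀ j k, |ν j| ≤ |lamhat k|)
    (hpert : specNorm (Bhat - B) ≤ lam0 / 4) :
    sinThetaNorm U Uhat ≤ 2 * specNorm (Bhat - B) / lam0 :=
  stmt11_general B Bhat hBhat hrank lam0 hlam0 U Uhat lam lamhat hUorth hUhatorth hUeig hUhateig
    hlam V ν hVorth hVperp hVeig htop hpert
end
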